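/- arXiv:1806.02662 — 5 statements merged into one kernel-verified Lean document; each statement's English description precedes it below -/
import Mathlib

section
/- If Q is a homological ρ-derivation of an almost commutative algebra A (odd, with [Q,Q]_ρ = 0), then for homogeneous f, g ∈ A, [fQ, gQ]_ρ = (f·Q(g) − ρ(|Q|+|f|, |Q|+|g|) g·Q(f)) Q; in particular the A-module generated by Q is a ρ-Lie subalgebra of the ρ-derivations. -/
/-- for a homological ρ-derivation `Q` of a ρ-commutative
algebra and homogeneous `f ∈ 𝒜 df`, `g ∈ 𝒜 dg`,
`[fQ, gQ]_ρ = (f·Q(g) − ρ(dQ+df, dQ+dg)·g·Q(f))·Q`; in particular the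
`A`-module generated by `Q` is a ρ-Lie subalgebra of the ρ-derivations. -/
theorem module_generated_by_homological_derivation
    {G K A : Type*} [AddCommGroup G] [Field K] [Ring A] [Algebra K A]
    (ρ : G → G → K) (𝒜 : G → Submodule K A)
    (h1 : ∀ a b : G, ρ a b * ρ b a = 1)
    (h2 : ∀ a b c : G, ρ (a + b) c = ρ a c * ρ b c)
    (h3 : ∀ a b c : G, ρ a (b + c) = ρ a b * ρ a c)
    (hcomm : ∀ (a b : G) (u v : A), u ∈ 𝒜 a → v ∈ 𝒜 b →
      u * v = ρ a b • (v * u))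
    (hchar : (2 : K) ≠ 0)
    (dQ : G) (Q : A →ₗ[K] A)
    (hodd : ρ dQ dQ = -1)
    (hQdeg : ∀ a : G, ∀ u ∈ 𝒜 a, Q u ∈ 𝒜 (a + dQ))
    (hQLeib : ∀ (a : G) (u v : A), u ∈ 𝒜 a →
      Q (u * v) = Q u * v + ρ dQ a • (u * Q v))
    (hQQ : ∀ u : A, Q (Q u) - ρ dQ dQ • Q (Q u) = 0)
    (df dg : G) (f g : A) (hf : f ∈ 𝒜 df) (hg : g ∈ 𝒜 dg) :
    ∀ h : A,
      f * Q (g * Q h) - ρ (dQ + df) (dQ + dg) • (g * Q (f * Q h)) =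
        (f * Q g - ρ (dQ + df) (dQ + dg) • (g * Q f)) * Q h := by
  intro h
  have hQQ0 : ∀ u : A, Q (Q u) = 0 := by
    intro u
    have h0 := hQQ u
    rw [hodd] at h0
    have h2' : (2 : K) • Q (Q u) = 0 := by
      rw [two_smul]
      rw [neg_smul, one_smul, sub_neg_eq_add] at h0
      exact h0
    rcases smul_eq_zero.mp h2' with hc | hc
    · exact absurd hc hchar
    · exact hc
  rw [hQLeib dg g (Q h) hg, hQLeib df f (Q h) hf, hQQ0]
  simp only [mul_zero, smul_zero, add_zero]
  rw [sub_mul, smul_mul_assoc, mul_assoc, mul_assoc]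
end

section
/- Let A be an almost commutative non-negatively graded algebra of degree n (i.e., every element of weight i > n lies in the subalgebra generated by elements of weight < i). Then every ρ-derivation of A of weight degree strictly less than −n is zero. -/
/-- if `A` is an almost commutative non-negatively graded
algebra of degree `n` (every homogeneous element of weight `i > n` lies in
the subalgebra generated by elements of weight `< i`) then every
ρ-derivation of weight degree `−k` with `k > n` is zero. -/
theorem derivation_of_weight_below_minus_n_is_zero
    {G K A : Type*} [AddCommGroup G] [DecidableEq G] [Field K]
    [Ring A] [Algebra K A]
    (ρ : G → G → K) (𝒜 : ℕ × G → Submodule K A) [GradedAlgebra 𝒜]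
    (n : ℕ)
    (hdeg : ∀ i : ℕ, n < i → ∀ a : G,
      (𝒜 (i, a) : Set A) ⊆
        (Algebra.adjoin K (⋃ p ∈ {p : ℕ × G | p.1 < i}, (𝒜 p : Set A)) : Subalgebra K A))
    (dX : G) (k : ℕ) (hk : n < k) (X : A →ₗ[K] A)
    (hXdeg : ∀ (i : ℕ) (a : G) (f : A), f ∈ 𝒜 (i, a) →
      (k ≤ i → X f ∈ 𝒜 (i - k, a + dX)) ∧ (i < k → X f = 0))
    (hXLeib : ∀ (i j : ℕ) (a b : G) (f g : A),
      f ∈ 𝒜 (i, a) → g ∈ 𝒜 (j, b) →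
      X (f * g) = X f * g + ρ dX a • (f * X g)) :
    X = 0 := by
  classical
  suffices h : ∀ i : ℕ, ∀ a : G, ∀ f ∈ 𝒜 (i, a), X f = 0 by
    ext x
    have hx : x = ∑ p ∈ (DirectSum.decompose 𝒜 x).support,
        (DirectSum.decompose 𝒜 x p : A) := (DirectSum.sum_support_decompose 𝒜 x).symm
    rw [LinearMap.zero_apply, hx, map_sum]
    exact Finset.sum_eq_zero fun p _ => h p.1 p.2 _ (SetLike.coe_mem _)
  intro i
  induction i using Nat.strong_induction_on with
  | _ i IH =>
    intro a f hf
    by_cases hik : i < k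
    · exact (hXdeg i a f hf).2 hik
    · push_neg at hik
      have hni : n < i := lt_of_lt_of_le hk hik
      have hfadj : f ∈ Algebra.adjoin K (⋃ p ∈ {p : ℕ × G | p.1 < i}, (𝒜 p : Set A)) :=
        hdeg i hni a hf
      -- helper: homogeneous elements of weight < i have all components killed
      have hbase : ∀ (q : ℕ × G) (x : A), q.1 < i → x ∈ 𝒜 q →
          ∀ p : ℕ × G, X (DirectSum.decompose 𝒜 x p : A) = 0 := by
        intro q x hq hxq p
        by_cases hpq : p = q
        · subst hpq
          rw [DirectSum.decompose_of_mem_same 𝒜 hxq]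
          exact IH p.1 hq p.2 x hxq
        · rw [DirectSum.decompose_of_mem_ne 𝒜 hxq (Ne.symm hpq)]
          exact map_zero X
      have key : ∀ x ∈ Algebra.adjoin K (⋃ p ∈ {p : ℕ × G | p.1 < i}, (𝒜 p : Set A)),
          ∀ p : ℕ × G, X (DirectSum.decompose 𝒜 x p : A) = 0 := by
        intro x hx
        induction hx using Algebra.adjoin_induction with
        | mem x hxs =>
          simp only [Set.mem_iUnion] at hxs
          obtain ⟨q, hq, hxq⟩ := hxs
          exact hbase q x hq hxq
        | algebraMap r =>
          exact hbase (0, 0) _ (Nat.zero_lt_of_lt hni)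
            (SetLike.algebraMap_mem_graded 𝒜 r)
        | add x y hx hy ihx ihy =>
          intro p
          rw [DirectSum.decompose_add, DirectSum.add_apply, Submodule.coe_add, map_add,
            ihx p, ihy p, add_zero]
        | mul x y hx hy ihx ihy =>
          intro p
          rw [DirectSum.decompose_mul, DirectSum.coe_mul_apply, map_sum]
          refine Finset.sum_eq_zero fun qr _ => ?_
          have h1 : (DirectSum.decompose 𝒜 x qr.1 : A) ∈ 𝒜 (qr.1.1, qr.1.2) := by
            rw [Prod.mk.eta]; exact SetLike.coe_mem _
          have h2 : (DirectSum.decompose 𝒜 y qr.2 : A) ∈ 𝒜 (qr.2.1, qr.2.2) := by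
            rw [Prod.mk.eta]; exact SetLike.coe_mem _
          rw [hXLeib qr.1.1 qr.2.1 qr.1.2 qr.2.2 _ _ h1 h2, ihx qr.1, ihy qr.2,
            zero_mul, mul_zero, smul_zero, add_zero]
      have := key f hfadj (i, a)
      rwa [DirectSum.decompose_of_mem_same 𝒜 hf] at this
end

section
/- For an almost commutative Q-algebra (A,Q) of degree 1, the derived bracket is ρ-antisymmetric: ⟦σ,ψ⟧_Q = −ρ(|σ|+|Q|, |ψ|+|Q|) ⟦ψ,σ⟧_Q for all sections σ, ψ. -/
/-- The ρ-commutator of two operators of assigned `G`-degrees `a`, `b`. -/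
def rhoComm {G K A : Type*} [Field K] [Ring A] [Algebra K A]
    (ρ : G → G → K) (a b : G) (X Y : A → A) : A → A :=
  fun f => X (Y f) - ρ a b • Y (X f)

/-- The derived ρ-antibracket `⟦X,Y⟧_Q = ρ(a+dQ,dQ)·[[Q,X]_ρ,Y]_ρ`, where
`X`, `Y` have `G`-degrees `a`, `b` and `Q` has `G`-degree `dQ`. -/
def derivedBracket {G K A : Type*} [AddCommGroup G] [Field K] [Ring A] [Algebra K A]
    (ρ : G → G → K) (dQ a b : G) (Q X Y : A → A) : A → A :=
  fun f => ρ (a + dQ) dQ • rhoComm ρ (dQ + a) b (rhoComm ρ dQ a Q X) Y f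

/-- the derived bracket is ρ-antisymmetric:
`⟦σ,ψ⟧_Q = −ρ(dσ+dQ, dψ+dQ)·⟦ψ,σ⟧_Q` for sections σ, ψ (which form an
abelian ρ-Lie subalgebra: `[σ,ψ]_ρ = 0`). -/
theorem derived_bracket_antisymmetry
    {G K A : Type*} [AddCommGroup G] [Field K] [Ring A] [Algebra K A]
    (ρ : G → G → K)
    (h1 : ∀ a b : G, ρ a b * ρ b a = 1)
    (h2 : ∀ a b c : G, ρ (a + b) c = ρ a c * ρ b c)
    (h3 : ∀ a b c : G, ρ a (b + c) = ρ a b * ρ a c)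
    (dQ dσ dψ : G) (Q σ ψ : A →ₗ[K] A)
    (hodd : ρ dQ dQ = -1)
    (hQQ : ∀ f : A, rhoComm ρ dQ dQ ⇑Q ⇑Q f = 0)
    (hab : ∀ f : A, rhoComm ρ dσ dψ ⇑σ ⇑ψ f = 0) :
    ∀ f : A,
      derivedBracket ρ dQ dσ dψ ⇑Q ⇑σ ⇑ψ f =
        -(ρ (dσ + dQ) (dψ + dQ) • derivedBracket ρ dQ dψ dσ ⇑Q ⇑ψ ⇑σ f) := by
  intro f
  have hab' : ∀ g : A, σ (ψ g) = ρ dσ dψ • ψ (σ g) := by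
    intro g
    simpa [rhoComm, sub_eq_zero] using hab g
  have hne : ∀ a b : G, ρ a b ≠ 0 := by
    intro a b h
    have := h1 a b
    rw [h] at this; simp at this
  have hinv : ∀ a b : G, ρ b a = (ρ a b)⁻¹ := fun a b =>
    eq_inv_of_mul_eq_one_left (h1 b a)
  have i1 : ρ dψ dσ = (ρ dσ dψ)⁻¹ := hinv dσ dψ
  have i2 : ρ dQ dσ = (ρ dσ dQ)⁻¹ := hinv dσ dQ
  have i3 : ρ dQ dψ = (ρ dψ dQ)⁻¹ := hinv dψ dQ
  have n1 : ρ dσ dψ ≠ 0 := hne _ _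
  have n2 : ρ dσ dQ ≠ 0 := hne _ _
  have n3 : ρ dψ dQ ≠ 0 := hne _ _
  simp only [derivedBracket, rhoComm, map_sub, map_smul, smul_sub, smul_smul, hab']
  match_scalars <;> simp only [h2, h3, hodd, i1, i2, i3] <;>
    field_simp <;> ring
end

section
/- For an almost commutative Q-algebra (A,Q) of degree 1, the derived bracket satisfies the ρ-graded Loday–Leibniz/Jacobi identity: ⟦σ,⟦ψ,ω⟧_Q⟧_Q = ⟦⟦σ,ψ⟧_Q, ω⟧_Q + ρ(|σ|+|Q|, |ψ|+|Q|) ⟦ψ, ⟦σ,ω⟧_Q⟧_Q. -/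
set_option maxHeartbeats 2000000 in
/-- the derived bracket satisfies the ρ-graded
Loday–Leibniz/Jacobi identity
`⟦σ,⟦ψ,ω⟧⟧ = ⟦⟦σ,ψ⟧,ω⟧ + ρ(dσ+dQ,dψ+dQ)·⟦ψ,⟦σ,ω⟧⟧`. -/
theorem derived_bracket_jacobi
    {G K A : Type*} [AddCommGroup G] [Field K] [Ring A] [Algebra K A]
    (ρ : G → G → K)
    (h1 : ∀ a b : G, ρ a b * ρ b a = 1)
    (h2 : ∀ a b c : G, ρ (a + b) c = ρ a c * ρ b c)
    (h3 : ∀ a b c : G, ρ a (b + c) = ρ a b * ρ a c)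
    (hchar : (2 : K) ≠ 0)
    (dQ dσ dψ dω : G) (Q σ ψ ω : A →ₗ[K] A)
    (hodd : ρ dQ dQ = -1)
    (hQQ : ∀ f : A, rhoComm ρ dQ dQ ⇑Q ⇑Q f = 0) :
    ∀ f : A,
      derivedBracket ρ dQ dσ (dψ + dω + dQ) ⇑Q ⇑σ
          (derivedBracket ρ dQ dψ dω ⇑Q ⇑ψ ⇑ω) f =
        derivedBracket ρ dQ (dσ + dψ + dQ) dω ⇑Q
            (derivedBracket ρ dQ dσ dψ ⇑Q ⇑σ ⇑ψ) ⇑ω f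
          + ρ (dσ + dQ) (dψ + dQ) •
            derivedBracket ρ dQ dψ (dσ + dω + dQ) ⇑Q ⇑ψ
              (derivedBracket ρ dQ dσ dω ⇑Q ⇑σ ⇑ω) f := by
  have hne : ∀ a b : G, ρ a b ≠ 0 := by
    intro a b h
    have := h1 a b
    rw [h] at this
    simp at this
  have hinv : ∀ a b : G, ρ b a = (ρ a b)⁻¹ := by
    intro a b
    exact eq_inv_of_mul_eq_one_right (h1 a b)
  have hQ2 : ∀ f : A, Q (Q f) = 0 := by
    intro f
    have h := hQQ f
    simp only [rhoComm, hodd, neg_smul, one_smul, sub_neg_eq_add] at h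
    have : (2:K) • Q (Q f) = 0 := by rw [two_smul]; exact h
    have := smul_eq_zero.mp this
    tauto
  intro f
  simp only [derivedBracket, rhoComm, map_sub, map_smul, smul_sub, smul_smul, map_neg, neg_smul, smul_neg, neg_neg,
    hQ2, map_zero, smul_zero, sub_zero, zero_sub, h2, h3, hodd]
  match_scalars
  all_goals
    simp only [hinv dQ dσ, hinv dQ dψ, hinv dQ dω, hinv dσ dψ, hinv dσ dω, hinv dψ dω, hodd]
    field_simp [hne dQ dσ, hne dQ dψ, hne dQ dω, hne dσ dψ, hne dσ dω, hne dψ dω]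
    try ring
    try field_simp [hne dQ dσ, hne dQ dψ, hne dQ dω, hne dσ dψ, hne dσ dω, hne dψ dω]
    try ring
end

section
/- For an almost commutative Q-algebra (A,Q) of degree 1, the anchor map is a morphism of brackets: a_Q(⟦σ,ψ⟧_Q) = [a_Q(σ), a_Q(ψ)]_ρ as ρ-derivations of B, for all sections σ, ψ. -/
/-- the anchor map `a_Q(σ)f = σ(Q f)` is a morphism of
brackets: `a_Q(⟦σ,ψ⟧_Q) = [a_Q(σ), a_Q(ψ)]_ρ` on the weight-0 part
`𝒲 0` of `A`. -/
theorem anchor_is_bracket_morphism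
    {G K A : Type*} [AddCommGroup G] [Field K] [Ring A] [Algebra K A]
    (ρ : G → G → K)
    (h1 : ∀ a b : G, ρ a b * ρ b a = 1)
    (h2 : ∀ a b c : G, ρ (a + b) c = ρ a c * ρ b c)
    (h3 : ∀ a b c : G, ρ a (b + c) = ρ a b * ρ a c)
    (hchar : (2 : K) ≠ 0)
    (𝒲 : ℕ → Submodule K A)
    (dQ dσ dψ : G) (Q σ ψ : A →ₗ[K] A)
    (hodd : ρ dQ dQ = -1)
    (hQQ : ∀ g : A, rhoComm ρ dQ dQ ⇑Q ⇑Q g = 0)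
    (hQw : ∀ i : ℕ, ∀ g ∈ 𝒲 i, Q g ∈ 𝒲 (i + 1))
    (hσw : ∀ i : ℕ, ∀ g ∈ 𝒲 (i + 1), σ g ∈ 𝒲 i)
    (hσ0 : ∀ g ∈ 𝒲 0, σ g = 0)
    (hψw : ∀ i : ℕ, ∀ g ∈ 𝒲 (i + 1), ψ g ∈ 𝒲 i)
    (hψ0 : ∀ g ∈ 𝒲 0, ψ g = 0) :
    ∀ f ∈ 𝒲 0,
      derivedBracket ρ dQ dσ dψ ⇑Q ⇑σ ⇑ψ (Q f) =
        σ (Q (ψ (Q f))) - ρ (dσ + dQ) (dψ + dQ) • ψ (Q (σ (Q f))) := by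

  intro f hf
  have hQQf : Q (Q f) = 0 := by
    have h := hQQ f
    simp only [rhoComm, hodd, neg_smul, one_smul, sub_neg_eq_add] at h
    have h2' : (2 : K) • Q (Q f) = 0 := by rw [two_smul]; exact h
    have := congrArg (fun x => (2 : K)⁻¹ • x) h2'
    simpa [smul_smul, inv_mul_cancel₀ hchar] using this
  have hσψ : σ (ψ (Q f)) = 0 := hσ0 _ (hψw 0 _ (hQw 0 f hf))
  have hc1 : ρ (dσ + dQ) dQ * ρ dQ dσ = -1 := by
    rw [h2, hodd]
    linear_combination -h1 dσ dQ
  have hc2 : ρ (dσ + dQ) dQ * ρ (dQ + dσ) dψ = ρ (dσ + dQ) (dψ + dQ) := by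
    rw [h3, h2, h2, h2]; ring
  show ρ (dσ + dQ) dQ •
      ((Q (σ (ψ (Q f))) - ρ dQ dσ • σ (Q (ψ (Q f)))) -
        ρ (dQ + dσ) dψ • ψ (Q (σ (Q f)) - ρ dQ dσ • σ (Q (Q f)))) = _
  rw [hσψ, map_zero, hQQf, map_zero, smul_zero, sub_zero, zero_sub]
  rw [smul_sub, ← neg_smul, smul_smul, smul_smul, mul_neg, hc1, hc2, neg_neg, one_smul]
end
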